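/- arXiv:math/0111092 — 3 statements merged into one kernel-verified Lean document; each statement's English description precedes it below -/
import Mathlib

section
/- The number of Young diagrams with nd boxes that are uniformly coloured in d colours (i.e., when each box (p,q) is given colour p−q mod d, each of the d colours appears exactly n times) equals the number of ordered d-tuples (Δ₁,…,Δ_d) of Young diagrams whose total number of boxes is n. -/
/-- The number of boxes `(p,q)` of the Young diagram `Δ` whose colour `p - q (mod d)`
equals `i`. -/
def colourCount (d : ℕ) (Δ : YoungDiagram) (i : ZMod d) : ℕ :=
  (Δ.cells.filter (fun c => ((c.1 : ZMod d) - (c.2 : ZMod d)) = i)).card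

/-- `UCY n d`: the number of Young diagrams with `n*d` boxes that are uniformly coloured
in `d` colours, i.e. every colour `i : ZMod d` appears exactly `n` times. -/
noncomputable def UCY (n d : ℕ) : ℕ :=
  Nat.card {Δ : YoungDiagram // Δ.card = n * d ∧ ∀ i : ZMod d, colourCount d Δ i = n}

/-- `CY n d`: the number of ordered `d`-tuples of Young diagrams with `n` boxes in total. -/
noncomputable def CY (n d : ℕ) : ℕ :=
  Nat.card {f : Fin d → YoungDiagram // ∑ i, (f i).card = n}



open Finset

namespace UCYAux

/-- gap lemma for order embeddings `Fin m ↪o ℕ` -/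
lemma orderEmb_gap {m : ℕ} (e : Fin m ↪o ℕ) :
    ∀ (k : ℕ) (a : ℕ) (ha : a < m) (hb : a + k < m), e ⟨a, ha⟩ + k ≤ e ⟨a + k, hb⟩ := by
  intro k
  induction k with
  | zero => intro a ha hb; simp
  | succ k ih =>
    intro a ha hb
    have h1 := ih a ha (by omega)
    have h2 : e ⟨a + k, by omega⟩ < e ⟨a + (k+1), hb⟩ := by
      apply e.strictMono
      simp [Fin.lt_iff_val_lt_val]
    omega

lemma orderEmb_le {m : ℕ} (e : Fin m ↪o ℕ) (k : Fin m) : (k : ℕ) ≤ e k := by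
  have h0 : (0 : ℕ) < m := k.pos
  have := orderEmb_gap e k 0 h0 (by simpa using k.2)
  calc (k:ℕ) ≤ e ⟨0, h0⟩ + k := by omega
  _ ≤ e ⟨0 + k, by simpa using k.2⟩ := this
  _ = e k := by congr 1; ext; simp

/-- Young diagram from an antitone function supported on `range m`. -/
def ofFun (w : ℕ → ℕ) (hw : Antitone w) (m : ℕ) (h0 : ∀ i, m ≤ i → w i = 0) : YoungDiagram where
  cells := (range m ×ˢ range (w 0 + 1)).filter fun c => c.2 < w c.1
  isLowerSet := by
    rintro ⟨i2, j2⟩ ⟨i1, j1⟩ ⟨hi, hj⟩ hc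
    simp only [Finset.coe_filter, Set.mem_setOf_eq, Finset.mem_product, Finset.mem_range] at hc ⊢
    obtain ⟨⟨him, hjm⟩, hcell⟩ := hc
    have hw1 : w i2 ≤ w i1 := hw hi
    refine ⟨⟨?_, ?_⟩, ?_⟩
    · by_contra h
      have := h0 i1 (by omega)
      omega
    · have : w i1 ≤ w 0 := hw (Nat.zero_le _)
      omega
    · omega

lemma mem_ofFun {w : ℕ → ℕ} {hw : Antitone w} {m : ℕ} {h0 : ∀ i, m ≤ i → w i = 0}
    {c : ℕ × ℕ} : c ∈ ofFun w hw m h0 ↔ c.2 < w c.1 := by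
  rcases c with ⟨i, j⟩
  dsimp only
  constructor
  · intro h
    have := (YoungDiagram.mem_cells _).2 h
    simp only [ofFun, Finset.mem_filter] at this
    exact this.2
  · intro h
    show (i, j) ∈ (ofFun w hw m h0).cells
    simp only [ofFun, Finset.mem_filter, Finset.mem_product, Finset.mem_range]
    refine ⟨⟨?_, ?_⟩, h⟩
    · by_contra hh
      have := h0 i (by omega)
      omega
    · have : w i ≤ w 0 := hw (Nat.zero_le _)
      omega

lemma rowLen_eq_of {μ : YoungDiagram} {i k : ℕ} (h : ∀ j, (i, j) ∈ μ ↔ j < k) :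
    μ.rowLen i = k := by
  rcases Nat.lt_trichotomy (μ.rowLen i) k with hlt | heq | hgt
  · exfalso
    have : (i, μ.rowLen i) ∈ μ := (h _).2 hlt
    rw [YoungDiagram.mem_iff_lt_rowLen] at this
    omega
  · exact heq
  · exfalso
    have : (i, k) ∈ μ := YoungDiagram.mem_iff_lt_rowLen.2 hgt
    have := (h k).1 this
    omega

lemma rowLen_ofFun {w : ℕ → ℕ} {hw : Antitone w} {m : ℕ} {h0 : ∀ i, m ≤ i → w i = 0}
    (i : ℕ) : (ofFun w hw m h0).rowLen i = w i :=
  rowLen_eq_of fun j => by simp [mem_ofFun]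

lemma rowLen_eq_zero_of {μ : YoungDiagram} {i : ℕ} (h : μ.colLen 0 ≤ i) : μ.rowLen i = 0 := by
  by_contra hh
  have : (i, 0) ∈ μ := YoungDiagram.mem_iff_lt_rowLen.2 (by omega)
  rw [YoungDiagram.mem_iff_lt_colLen] at this
  omega

lemma colLen_le_card (μ : YoungDiagram) : μ.colLen 0 ≤ μ.card := by
  rw [YoungDiagram.colLen_eq_card]
  exact Finset.card_le_card (Finset.filter_subset _ _)

/-- cells as a biUnion of rows -/
lemma cells_eq_biUnion (μ : YoungDiagram) (m : ℕ) (hm : μ.colLen 0 ≤ m) :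
    μ.cells = (range m).biUnion
      (fun i => (range (μ.rowLen i)).image (fun j => (i, j))) := by
  ext ⟨i, j⟩
  simp only [Finset.mem_biUnion, Finset.mem_range, Finset.mem_image, YoungDiagram.mem_cells]
  constructor
  · intro h
    have hj : j < μ.rowLen i := YoungDiagram.mem_iff_lt_rowLen.1 h
    have hi : i < m := by
      by_contra hh
      have := rowLen_eq_zero_of (μ := μ) (i := i) (by omega)
      omega
    exact ⟨i, hi, j, hj, rfl⟩
  · rintro ⟨i', hi', j', hj', h⟩
    obtain ⟨rfl, rfl⟩ := Prod.mk.injEq .. ▸ h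
    exact YoungDiagram.mem_iff_lt_rowLen.2 hj'

lemma card_eq_sum_rowLen (μ : YoungDiagram) (m : ℕ) (hm : μ.colLen 0 ≤ m) :
    μ.card = ∑ i ∈ range m, μ.rowLen i := by
  rw [YoungDiagram.card, cells_eq_biUnion μ m hm, Finset.card_biUnion]
  · refine Finset.sum_congr rfl fun i _ => ?_
    rw [Finset.card_image_of_injective _ (fun a b hab => by simpa using hab), Finset.card_range]
  · intro x _ y _ hxy
    simp only [Finset.disjoint_left, Finset.mem_image, Finset.mem_range]
    rintro ⟨a, b⟩ ⟨j, _, h⟩ ⟨j', _, h'⟩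
    obtain ⟨rfl, rfl⟩ := Prod.mk.injEq .. ▸ h
    obtain ⟨rfl, -⟩ := Prod.mk.injEq .. ▸ h'
    exact hxy rfl

end UCYAux

namespace UCYAux

/-- beads of a diagram with `m` rows allowed -/
def toBeads (m : ℕ) (μ : YoungDiagram) : Finset ℕ :=
  (range m).image (fun i => μ.rowLen i + (m - 1 - i))

lemma toBeads_injOn (m : ℕ) (μ : YoungDiagram) :
    ∀ x ∈ range m, ∀ y ∈ range m,
      (μ.rowLen x + (m - 1 - x) = μ.rowLen y + (m - 1 - y)) → x = y := by
  intro x hx y hy h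
  rw [Finset.mem_range] at hx hy
  rcases Nat.lt_trichotomy x y with hlt | heq | hgt
  · have := μ.rowLen_anti x y (le_of_lt hlt); omega
  · exact heq
  · have := μ.rowLen_anti y x (le_of_lt hgt); omega

lemma card_toBeads (m : ℕ) (μ : YoungDiagram) : (toBeads m μ).card = m := by
  rw [toBeads, Finset.card_image_of_injOn (toBeads_injOn m μ), Finset.card_range]

/-- the increasing enumeration of the beads -/
lemma orderEmb_toBeads (m : ℕ) (μ : YoungDiagram) {m' : ℕ} (hm' : (toBeads m μ).card = m')
    (k : Fin m') : (toBeads m μ).orderEmbOfFin hm' k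
      = μ.rowLen (m - 1 - (k : ℕ)) + (k : ℕ) := by
  have hmm : m = m' := by rw [← hm', card_toBeads]
  subst hmm
  have hf : ∀ x : Fin m, (fun k : Fin m => μ.rowLen (m - 1 - (k:ℕ)) + (k:ℕ)) x ∈ toBeads m μ := by
    intro x
    simp only [toBeads, Finset.mem_image, Finset.mem_range]
    exact ⟨m - 1 - (x:ℕ), by omega, by congr 1; omega⟩
  have hmono : StrictMono (fun k : Fin m => μ.rowLen (m - 1 - (k:ℕ)) + (k:ℕ)) := by
    intro a b hab
    have hab' : (a:ℕ) < b := hab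
    have hb : (b:ℕ) < m := b.2
    have := μ.rowLen_anti (m - 1 - (b:ℕ)) (m - 1 - (a:ℕ)) (by omega)
    simp only
    omega
  have := Finset.orderEmbOfFin_unique hm' hf hmono
  exact (congrFun this.symm k)

/-- row lengths from a bead set, via the sorted list (no dependent proofs) -/
def wFun (S : Finset ℕ) : ℕ → ℕ := fun i =>
  if i < S.card then (S.sort (· ≤ ·)).getD (S.card - 1 - i) 0 - (S.card - 1 - i) else 0

lemma wFun_nonpos {S : Finset ℕ} {i : ℕ} (h : S.card ≤ i) : wFun S i = 0 :=
  if_neg (by omega)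

lemma sort_getD (S : Finset ℕ) {m : ℕ} (hm : S.card = m) (k : ℕ) (hk : k < m) :
    (S.sort (· ≤ ·)).getD k 0 = S.orderEmbOfFin hm ⟨k, hk⟩ := by
  rw [Finset.orderEmbOfFin_apply]
  exact List.getD_eq_getElem _ _ (by rw [Finset.length_sort, hm]; exact hk)

lemma wFun_antitone (S : Finset ℕ) : Antitone (wFun S) := by
  intro a b hab
  rcases Nat.lt_or_ge b S.card with hb | hb
  · have ha : a < S.card := lt_of_le_of_lt hab hb
    simp only [wFun, if_pos ha, if_pos hb]
    rw [sort_getD S rfl _ (by omega : S.card - 1 - a < S.card),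
      sort_getD S rfl _ (by omega : S.card - 1 - b < S.card)]
    have hgap := orderEmb_gap (S.orderEmbOfFin rfl) ((S.card - 1 - a) - (S.card - 1 - b))
      (S.card - 1 - b) (by omega) (by omega)
    have h2 : (⟨S.card - 1 - b + ((S.card - 1 - a) - (S.card - 1 - b)), by omega⟩ : Fin S.card)
        = ⟨S.card - 1 - a, by omega⟩ := by ext; simp; omega
    rw [h2] at hgap
    omega
  · rw [wFun_nonpos hb]
    exact Nat.zero_le _

/-- the diagram associated to a bead set -/
def ofBeads (S : Finset ℕ) : YoungDiagram :=
  ofFun (wFun S) (wFun_antitone S) S.card (fun _ h => wFun_nonpos h)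

lemma mem_ofBeads {S : Finset ℕ} {c : ℕ × ℕ} : c ∈ ofBeads S ↔ c.2 < wFun S c.1 :=
  mem_ofFun

lemma rowLen_ofBeads (S : Finset ℕ) (i : ℕ) : (ofBeads S).rowLen i = wFun S i :=
  rowLen_ofFun i

lemma colLen_ofBeads (S : Finset ℕ) : (ofBeads S).colLen 0 ≤ S.card := by
  by_contra h
  have : (S.card, 0) ∈ ofBeads S := YoungDiagram.mem_iff_lt_colLen.2 (by omega)
  rw [mem_ofBeads] at this
  simp [wFun_nonpos (le_refl S.card)] at this

lemma wFun_toBeads (m : ℕ) (μ : YoungDiagram) (hm : μ.colLen 0 ≤ m) (i : ℕ) :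
    wFun (toBeads m μ) i = μ.rowLen i := by
  have hcard := card_toBeads m μ
  rcases Nat.lt_or_ge i m with hi | hi
  · rw [wFun, if_pos (by omega : i < (toBeads m μ).card),
      sort_getD (toBeads m μ) hcard ((toBeads m μ).card - 1 - i) (by omega),
      orderEmb_toBeads m μ hcard]
    simp only
    have h1 : m - 1 - ((toBeads m μ).card - 1 - i) = i := by omega
    rw [h1]
    omega
  · rw [wFun_nonpos (by omega), rowLen_eq_zero_of (le_trans hm hi)]

/-- L2 : ofBeads ∘ toBeads = id on diagrams with at most m rows -/
lemma ofBeads_toBeads (m : ℕ) (μ : YoungDiagram) (hm : μ.colLen 0 ≤ m) :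
    ofBeads (toBeads m μ) = μ := by
  ext ⟨i, j⟩
  rw [YoungDiagram.mem_cells, YoungDiagram.mem_cells, mem_ofBeads]
  show j < wFun (toBeads m μ) i ↔ _
  rw [wFun_toBeads m μ hm i, YoungDiagram.mem_iff_lt_rowLen]

/-- L3 : toBeads ∘ ofBeads = id -/
lemma toBeads_ofBeads (S : Finset ℕ) : toBeads S.card (ofBeads S) = S := by
  apply Finset.eq_of_subset_of_card_le
  · intro x hx
    simp only [toBeads, Finset.mem_image, Finset.mem_range] at hx
    obtain ⟨i, hi, rfl⟩ := hx
    rw [rowLen_ofBeads, wFun, if_pos hi, sort_getD S rfl (S.card - 1 - i) (by omega)]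
    have hge := orderEmb_le (S.orderEmbOfFin rfl) ⟨S.card - 1 - i, by omega⟩
    have heq : (S.orderEmbOfFin rfl ⟨S.card - 1 - i, by omega⟩ : ℕ) - (S.card - 1 - i)
        + (S.card - 1 - i) = S.orderEmbOfFin rfl ⟨S.card - 1 - i, by omega⟩ := by
      simp only [Fin.val_mk] at hge
      omega
    rw [heq]
    exact Finset.orderEmbOfFin_mem S rfl _
  · rw [card_toBeads]

/-- L4 : sum of beads -/
lemma sum_toBeads (m : ℕ) (μ : YoungDiagram) (hm : μ.colLen 0 ≤ m) :
    ∑ x ∈ toBeads m μ, x = μ.card + ∑ k ∈ range m, k := by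
  rw [toBeads, Finset.sum_image (toBeads_injOn m μ), card_eq_sum_rowLen μ m hm,
    Finset.sum_add_distrib]
  congr 1
  exact Finset.sum_range_reflect (fun k => k) m

end UCYAux

namespace UCYAux

lemma ediv_sub_ediv_pred (d : ℕ) (hd : 0 < d) (x : ℤ) :
    x / d - (x - 1) / d = if x % d = 0 then 1 else 0 := by
  have hd' : (0:ℤ) < d := by exact_mod_cast hd
  have h := Int.mul_ediv_add_emod x d
  have hr0 : 0 ≤ x % d := Int.emod_nonneg x (by omega)
  have hrd : x % d < d := Int.emod_lt_of_pos x hd'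
  by_cases hr : x % d = 0
  · have e1 : x - 1 = (↑d - 1) + (x / d - 1) * ↑d := by
      rw [hr] at h; linear_combination -h
    have hA : (x - 1) / d = x / d - 1 := by
      rw [e1, Int.add_mul_ediv_right _ _ (by omega : (d:ℤ) ≠ 0),
        show ((d:ℤ) - 1) / d = 0 from Int.ediv_eq_zero_of_lt (by omega) (by omega)]
      ring
    rw [hA, if_pos hr]; ring
  · have e1 : x - 1 = (x % d - 1) + (x / d) * ↑d := by linear_combination -h
    have hA : (x - 1) / d = x / d := by
      rw [e1, Int.add_mul_ediv_right _ _ (by omega : (d:ℤ) ≠ 0),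
        show (x % d - 1) / d = 0 from Int.ediv_eq_zero_of_lt (by omega) (by omega)]
      ring
    rw [hA, if_neg hr]; ring

lemma ediv_neg_one (d : ℕ) (hd : 0 < d) (a : ℤ) (h1 : -(d:ℤ) ≤ a) (h2 : a < 0) :
    a / (d:ℤ) = -1 := by
  have e1 : a = (a + d) + (-1) * (d:ℤ) := by ring
  rw [e1, Int.add_mul_ediv_right _ _ (by exact_mod_cast hd.ne' : (d:ℤ) ≠ 0),
    Int.ediv_eq_zero_of_lt (by omega) (by omega)]
  ring

lemma count_mod (d : ℕ) (hd : 0 < d) (w : ℕ) (a : ℤ) :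
    (((range w).filter (fun (j : ℕ) => ((j:ℤ) - a) % (d:ℤ) = 0)).card : ℤ)
      = ((w:ℤ) - 1 - a) / d - (-1 - a) / d := by
  induction w with
  | zero =>
    rw [show ((0:ℕ):ℤ) - 1 - a = -1 - a by push_cast; ring]
    simp
  | succ w ih =>
    rw [Finset.range_add_one, Finset.filter_insert]
    have hx := ediv_sub_ediv_pred d hd ((w:ℤ) - a)
    have hc1 : ((w:ℕ) + 1 : ℤ) - 1 - a = (w:ℤ) - a := by ring
    have hc2 : ((w:ℕ) : ℤ) - 1 - a = ((w:ℤ) - a) - 1 := by ring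
    by_cases hp : ((w:ℤ) - a) % (d:ℤ) = 0
    · rw [if_pos hp] at hx
      rw [if_pos hp, Finset.card_insert_of_notMem (by simp)]
      rw [hc2] at ih
      push_cast
      rw [hc1]
      linarith
    · rw [if_neg hp] at hx
      rw [if_neg hp]
      rw [hc2] at ih
      push_cast
      rw [hc1]
      linarith

lemma Dsum (d : ℕ) (hd : 0 < d) (c : ℕ) (hc : c < d) (R : ℕ) :
    ∑ i ∈ range (R * d), (((c:ℤ) - 1 - i) / d)
      = R * c - R * d - d * ∑ s ∈ range R, (s:ℤ) := by
  induction R with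
  | zero => simp
  | succ R ih =>
    have hsplit : (R + 1) * d = R * d + d := by ring
    rw [hsplit, Finset.sum_range_add, ih]
    have hterm : ∀ t ∈ range d, ((c:ℤ) - 1 - ((R * d + t : ℕ) : ℤ)) / d
        = (if t < c then (0:ℤ) else -1) - R := by
      intro t ht
      rw [Finset.mem_range] at ht
      have e1 : (c:ℤ) - 1 - ((R * d + t : ℕ) : ℤ) = ((c:ℤ) - 1 - t) + (-(R:ℤ)) * d := by
        push_cast; ring
      rw [e1, Int.add_mul_ediv_right _ _ (by exact_mod_cast hd.ne' : (d:ℤ) ≠ 0)]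
      by_cases htc : t < c
      · rw [if_pos htc,
          show ((c:ℤ) - 1 - t) / d = 0 from Int.ediv_eq_zero_of_lt (by omega) (by omega)]
        ring
      · rw [if_neg htc, ediv_neg_one d hd _ (by omega) (by omega)]
        ring
    rw [Finset.sum_congr rfl hterm, Finset.sum_sub_distrib, Finset.sum_const, Finset.card_range]
    have hite : ∑ t ∈ range d, (if t < c then (0:ℤ) else -1) = -((d:ℤ) - c) := by
      rw [Finset.sum_ite, Finset.sum_const, Finset.sum_const]
      have hfil : (range d).filter (fun t => ¬ t < c) = Finset.Ico c d := by
        ext t; simp; omega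
      rw [hfil, Nat.card_Ico]
      simp only [smul_zero, nsmul_eq_mul, zero_add, mul_neg_one]
      push_cast [le_of_lt hc]
      ring
    rw [hite, Finset.sum_range_succ]
    push_cast [nsmul_eq_mul]
    ring

end UCYAux

namespace UCYAux

lemma zmod_eq_iff_val {d : ℕ} (hd : 0 < d) (y : ZMod d) (c : ℕ) (hc : c < d) :
    y = (c : ZMod d) ↔ y.val = c := by
  haveI : NeZero d := ⟨hd.ne'⟩
  constructor
  · rintro rfl; exact ZMod.val_cast_of_lt hc
  · rintro h; rw [← h]; exact (ZMod.natCast_rightInverse y).symm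

lemma colour_pred (d : ℕ) (hd : 0 < d) (c : ℕ) (i j : ℕ) :
    (((i:ZMod d) - (j:ZMod d)) = (c : ZMod d)) ↔ ((j:ℤ) - ((i:ℤ) - c)) % (d:ℤ) = 0 := by
  haveI : NeZero d := ⟨hd.ne'⟩
  rw [show ((j:ℤ) - ((i:ℤ) - c)) % (d:ℤ) = 0 ↔ (d:ℤ) ∣ ((j:ℤ) - ((i:ℤ) - c)) from
    ⟨Int.dvd_of_emod_eq_zero, Int.emod_eq_zero_of_dvd⟩,
    ← ZMod.intCast_zmod_eq_zero_iff_dvd]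
  constructor
  · intro h
    push_cast
    linear_combination -h
  · intro h
    push_cast at h
    linear_combination -h

/-- colourCount as a sum over rows -/
lemma colourCount_eq (d : ℕ) (μ : YoungDiagram) (m : ℕ) (hm : μ.colLen 0 ≤ m) (x : ZMod d) :
    colourCount d μ x
      = ∑ i ∈ range m,
          ((range (μ.rowLen i)).filter (fun j : ℕ => ((i:ZMod d) - (j:ZMod d)) = x)).card := by
  rw [colourCount, cells_eq_biUnion μ m hm, Finset.filter_biUnion, Finset.card_biUnion]
  · refine Finset.sum_congr rfl fun i _ => ?_
    rw [Finset.filter_image]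
    rw [Finset.card_image_of_injective _ (fun a b hab => by simpa using hab)]
  · intro x' _ y _ hxy
    apply Finset.disjoint_filter_filter
    simp only [Finset.disjoint_left, Finset.mem_image, Finset.mem_range]
    rintro ⟨a, b⟩ ⟨j, _, h⟩ ⟨j', _, h'⟩
    obtain ⟨rfl, rfl⟩ := Prod.mk.injEq .. ▸ h
    obtain ⟨rfl, -⟩ := Prod.mk.injEq .. ▸ h'
    exact hxy rfl

/-- The master formula: colour counts in terms of bead sums. -/
lemma master (d R : ℕ) (hd : 0 < d) (μ : YoungDiagram) (hrows : μ.colLen 0 ≤ R * d)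
    (c : ℕ) (hc : c < d) :
    (colourCount d μ (c : ZMod d) : ℤ) + R * d * R + R * c
      = (∑ x ∈ toBeads (R * d) μ, (((x + c) / d : ℕ) : ℤ)) + R * d
        + d * ∑ s ∈ range R, (s : ℤ) := by
  rw [colourCount_eq d μ (R*d) hrows (c : ZMod d)]
  push_cast
  have hrow : ∀ i ∈ range (R * d),
      ((((range (μ.rowLen i)).filter (fun j : ℕ => ((i:ZMod d) - (j:ZMod d)) = (c:ZMod d))).card : ℤ))
        = (((μ.rowLen i + (R * d - 1 - i) + c : ℕ) : ℤ) / d - R) - (((c:ℤ) - 1 - i) / d) := by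
    intro i hi
    rw [Finset.mem_range] at hi
    have hfil : (range (μ.rowLen i)).filter (fun j : ℕ => ((i:ZMod d) - (j:ZMod d)) = (c:ZMod d))
        = (range (μ.rowLen i)).filter (fun (j:ℕ) => ((j:ℤ) - ((i:ℤ) - c)) % (d:ℤ) = 0) := by
      apply Finset.filter_congr
      intro j _
      rw [colour_pred d hd c i j]
    rw [hfil, count_mod d hd]
    have e1 : ((μ.rowLen i : ℤ) - 1 - ((i:ℤ) - c))
        = ((μ.rowLen i + (R * d - 1 - i) + c : ℕ) : ℤ) + (-(R:ℤ)) * d := by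
      have : ((R * d - 1 - i : ℕ) : ℤ) = (R:ℤ) * d - 1 - i := by
        push_cast [Nat.cast_sub]
        omega
      push_cast [this]
      ring
    have e2 : (-1 - ((i:ℤ) - c)) = (c:ℤ) - 1 - i := by ring
    rw [e1, e2, Int.add_mul_ediv_right _ _ (by exact_mod_cast hd.ne' : (d:ℤ) ≠ 0)]
    ring
  rw [Finset.sum_congr rfl hrow, Finset.sum_sub_distrib, Finset.sum_sub_distrib,
    Finset.sum_const, Finset.card_range, Dsum d hd c hc R]
  have hbeads : ∑ i ∈ range (R * d), (((μ.rowLen i + (R * d - 1 - i) + c : ℕ) : ℤ) / (d:ℤ))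
      = ∑ x ∈ toBeads (R * d) μ, (((x:ℕ):ℤ) + (c:ℤ)) / (d:ℤ) := by
    rw [toBeads, Finset.sum_image (toBeads_injOn (R*d) μ)]
    refine Finset.sum_congr rfl fun i _ => ?_
    norm_cast
  rw [hbeads]
  push_cast [nsmul_eq_mul]
  ring

end UCYAux

namespace UCYAux

lemma dvd_iff_mod (d : ℕ) (hd : 0 < d) (c x : ℕ) (hc : c + 1 < d) :
    d ∣ (x + c + 1) ↔ x % d = d - 1 - c := by
  have hx := Nat.div_add_mod x d
  have hr : x % d < d := Nat.mod_lt x hd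
  rw [show x + c + 1 = d * (x / d) + (x % d + c + 1) by omega,
    Nat.dvd_add_right ⟨x / d, rfl⟩]
  constructor
  · rintro ⟨k, hk⟩
    have hk2 : k < 2 := by
      by_contra hh
      push_neg at hh
      have : d * 2 ≤ d * k := Nat.mul_le_mul_left d hh
      omega
    have hk1 : 1 ≤ k := by
      rcases Nat.eq_zero_or_pos k with rfl | h
      · omega
      · exact h
    have : k = 1 := by omega
    rw [this, Nat.mul_one] at hk
    omega
  · intro h
    rw [show x % d + c + 1 = d by omega]

lemma psi_succ (d : ℕ) (hd : 0 < d) (c : ℕ) (hc : c + 1 < d) (S : Finset ℕ) :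
    ∑ x ∈ S, (x + (c + 1)) / d
      = ∑ x ∈ S, (x + c) / d + (S.filter (fun x => x % d = d - 1 - c)).card := by
  have hterm : ∀ x ∈ S, (x + (c + 1)) / d
      = (x + c) / d + if x % d = d - 1 - c then 1 else 0 := by
    intro x _
    rw [show x + (c + 1) = (x + c) + 1 by ring, Nat.succ_div]
    congr 1
    rw [show x + c + 1 = x + c + 1 from rfl]
    by_cases h : x % d = d - 1 - c
    · rw [if_pos h, if_pos ((dvd_iff_mod d hd c x hc).2 h)]
    · rw [if_neg h, if_neg (fun hh => h ((dvd_iff_mod d hd c x hc).1 hh))]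
  rw [Finset.sum_congr rfl hterm, Finset.sum_add_distrib, Finset.card_filter]

lemma cnt_sum (d : ℕ) (hd : 0 < d) (S : Finset ℕ) :
    ∑ r ∈ range d, (S.filter (fun x => x % d = r)).card = S.card :=
  (Finset.card_eq_sum_card_fiberwise (fun x _ => Finset.mem_range.2 (Nat.mod_lt _ hd))).symm

lemma colour_sum (d : ℕ) (hd : 0 < d) (μ : YoungDiagram) :
    ∑ c ∈ range d, colourCount d μ (c : ZMod d) = μ.card := by
  haveI : NeZero d := ⟨hd.ne'⟩
  have h := Finset.card_eq_sum_card_fiberwise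
    (f := fun c : ℕ × ℕ => ((c.1 : ZMod d) - (c.2 : ZMod d)).val)
    (s := μ.cells) (t := range d)
    (fun x _ => Finset.mem_range.2 (ZMod.val_lt _))
  rw [YoungDiagram.card, h]
  refine Finset.sum_congr rfl fun c hc => ?_
  rw [Finset.mem_range] at hc
  rw [colourCount]
  congr 1
  apply Finset.filter_congr
  intro x _
  rw [zmod_eq_iff_val hd _ c hc]

/-- The difference equation between consecutive colour counts. -/
lemma step (d R : ℕ) (hd : 0 < d) (μ : YoungDiagram) (hrows : μ.colLen 0 ≤ R * d)
    (c : ℕ) (hc : c + 1 < d) :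
    (colourCount d μ ((c + 1 : ℕ) : ZMod d) : ℤ) + R
      = (colourCount d μ (c : ZMod d) : ℤ)
        + ((toBeads (R * d) μ).filter (fun x => x % d = d - 1 - c)).card := by
  have h1 := master d R hd μ hrows c (by omega)
  have h2 := master d R hd μ hrows (c + 1) hc
  have h3 := congrArg (fun t : ℕ => (t : ℤ)) (psi_succ d hd c hc (toBeads (R * d) μ))
  push_cast at h1 h2 h3 ⊢
  linarith

/-- Direction A : uniform colouring implies all runners have R beads. -/
lemma bridgeA (n d R : ℕ) (hd : 0 < d) (μ : YoungDiagram) (hrows : μ.colLen 0 ≤ R * d)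
    (hu : ∀ i : ZMod d, colourCount d μ i = n) :
    ∀ r, r < d → ((toBeads (R * d) μ).filter (fun x => x % d = r)).card = R := by
  have hpos : ∀ r, 1 ≤ r → r < d →
      ((toBeads (R * d) μ).filter (fun x => x % d = r)).card = R := by
    intro r h1 h2
    have hc : (d - 1 - r) + 1 < d := by omega
    have hs := step d R hd μ hrows (d - 1 - r) hc
    rw [hu, hu, show d - 1 - (d - 1 - r) = r by omega] at hs
    omega
  intro r hr
  rcases Nat.eq_zero_or_pos r with rfl | hr1
  · have htot := cnt_sum d hd (toBeads (R * d) μ)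
    rw [card_toBeads] at htot
    obtain ⟨d', rfl⟩ : ∃ d', d = d' + 1 := ⟨d - 1, by omega⟩
    rw [Finset.sum_range_succ'] at htot
    have hrest : ∑ r ∈ range d', ((toBeads (R * (d' + 1)) μ).filter
        (fun x => x % (d' + 1) = r + 1)).card = d' * R := by
      rw [Finset.sum_congr rfl (fun r hr => hpos (r + 1) (by omega)
        (by rw [Finset.mem_range] at hr; omega)), Finset.sum_const, Finset.card_range,
        smul_eq_mul]
    rw [hrest] at htot
    have : R * (d' + 1) = d' * R + R := by ring
    omega
  · exact hpos r hr1 hr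

/-- Direction B : all runners R beads + card implies uniform colouring. -/
lemma bridgeB (n d R : ℕ) (hd : 0 < d) (μ : YoungDiagram) (hrows : μ.colLen 0 ≤ R * d)
    (hcnt : ∀ r, r < d → ((toBeads (R * d) μ).filter (fun x => x % d = r)).card = R)
    (hcard : μ.card = n * d) :
    ∀ i : ZMod d, colourCount d μ i = n := by
  haveI : NeZero d := ⟨hd.ne'⟩
  have hall : ∀ c, c < d → colourCount d μ (c : ZMod d) = colourCount d μ ((0 : ℕ) : ZMod d) := by
    intro c
    induction c with
    | zero => intro _; rfl
    | succ c ih =>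
      intro hc
      have hs := step d R hd μ hrows c hc
      rw [hcnt (d - 1 - c) (by omega)] at hs
      have : colourCount d μ ((c + 1 : ℕ) : ZMod d) = colourCount d μ (c : ZMod d) := by
        omega
      rw [this, ih (by omega)]
  have htot := colour_sum d hd μ
  rw [Finset.sum_congr rfl (fun c hc => hall c (Finset.mem_range.1 hc)), Finset.sum_const,
    Finset.card_range, smul_eq_mul, hcard] at htot
  have h0 : colourCount d μ ((0 : ℕ) : ZMod d) = n := by
    have : d * colourCount d μ ((0 : ℕ) : ZMod d) = d * n := by rw [htot]; ring
    exact Nat.eq_of_mul_eq_mul_left hd this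
  intro i
  have hv : i = ((i.val : ℕ) : ZMod d) := ((ZMod.natCast_rightInverse i)).symm
  rw [hv, hall i.val (ZMod.val_lt i), h0]

/-- staircase sum decomposition -/
lemma stair (d R : ℕ) :
    ∑ k ∈ range (R * d), k = d * (d * ∑ s ∈ range R, s) + R * ∑ r ∈ range d, r := by
  apply Nat.eq_of_mul_eq_mul_right (show 0 < 2 by norm_num)
  rw [Finset.sum_range_id_mul_two]
  have h1 : (d * (d * ∑ s ∈ range R, s) + R * ∑ r ∈ range d, r) * 2
      = d * d * ((∑ s ∈ range R, s) * 2) + R * ((∑ r ∈ range d, r) * 2) := by ring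
  rw [h1, Finset.sum_range_id_mul_two, Finset.sum_range_id_mul_two]
  rcases R with _ | R'
  · simp
  rcases d with _ | d'
  · simp
  simp only [Nat.succ_sub_one]
  rw [show (R' + 1) * (d' + 1) = R' * d' + R' + d' + 1 by ring, Nat.add_sub_cancel]
  ring

end UCYAux


namespace UCYAux

lemma comp_card (S : Finset ℕ) :
    (ofBeads S).card + ∑ k ∈ range S.card, k = ∑ x ∈ S, x := by
  have h := sum_toBeads S.card (ofBeads S) (colLen_ofBeads S)
  rw [toBeads_ofBeads] at h
  omega

lemma rows_le (n d : ℕ) (hd : 0 < d) (Δ : YoungDiagram) (h : Δ.card = n * d) :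
    Δ.colLen 0 ≤ (n * d + 1) * d :=
  calc Δ.colLen 0 ≤ Δ.card := colLen_le_card Δ
  _ = n * d := h
  _ ≤ n * d * d := Nat.le_mul_of_pos_right _ hd
  _ ≤ n * d * d + d := Nat.le_add_right _ _
  _ = (n * d + 1) * d := by ring

lemma mod_image_injOn (d : ℕ) (hd : 0 < d) (S : Finset ℕ) (r : ℕ) :
    ∀ x ∈ S.filter (fun x => x % d = r), ∀ y ∈ S.filter (fun x => x % d = r),
      x / d = y / d → x = y := by
  intro x hx y hy h
  rw [Finset.mem_filter] at hx hy
  have e1 := Nat.div_add_mod x d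
  have e2 := Nat.div_add_mod y d
  rw [← h] at e2
  omega

lemma runner_inj (d : ℕ) (hd : 0 < d) (r : ℕ) :
    Function.Injective (fun k : ℕ => d * k + r) := by
  intro a b hab
  simp only at hab
  exact Nat.eq_of_mul_eq_mul_left hd (by omega)

lemma runner_div (d : ℕ) (hd : 0 < d) (r : ℕ) (hr : r < d) (k : ℕ) :
    (d * k + r) / d = k := by
  rw [Nat.add_comm, Nat.add_mul_div_left _ _ hd, Nat.div_eq_of_lt hr]
  omega

lemma runner_mod (d : ℕ) (r : ℕ) (hr : r < d) (k : ℕ) : (d * k + r) % d = r := by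
  rw [Nat.mul_add_mod]
  exact Nat.mod_eq_of_lt hr

/-- the bead set associated to a tuple of runner sets -/
def glue (d : ℕ) (T : Fin d → Finset ℕ) : Finset ℕ :=
  Finset.univ.biUnion (fun r : Fin d => (T r).image (fun k => d * k + (r : ℕ)))

lemma glue_disj (d : ℕ) (T : Fin d → Finset ℕ) :
    ∀ x ∈ (Finset.univ : Finset (Fin d)), ∀ y ∈ Finset.univ, x ≠ y →
      Disjoint ((T x).image (fun k => d * k + (x : ℕ))) ((T y).image (fun k => d * k + (y : ℕ))) := by
  intro r _ r' _ hrr'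
  simp only [Finset.disjoint_left, Finset.mem_image]
  rintro a ⟨k, _, rfl⟩ ⟨k', _, h⟩
  apply hrr'
  have h1 := runner_mod d (r : ℕ) r.2 k
  have h2 := runner_mod d (r' : ℕ) r'.2 k'
  rw [h] at h2
  exact Fin.ext (by omega)

lemma glue_fiber (d : ℕ) (hd : 0 < d) (T : Fin d → Finset ℕ) (r : Fin d) :
    (glue d T).filter (fun x => x % d = (r : ℕ)) = (T r).image (fun k => d * k + (r : ℕ)) := by
  ext x
  simp only [glue, Finset.mem_filter, Finset.mem_biUnion, Finset.mem_image, Finset.mem_univ,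
    true_and]
  constructor
  · rintro ⟨⟨r', k, hk, rfl⟩, hmod⟩
    have h1 := runner_mod d (r' : ℕ) r'.2 k
    have : r' = r := Fin.ext (by omega)
    subst this
    exact ⟨k, hk, rfl⟩
  · rintro ⟨k, hk, rfl⟩
    exact ⟨⟨r, k, hk, rfl⟩, runner_mod d (r : ℕ) r.2 k⟩

lemma glue_card (d : ℕ) (hd : 0 < d) (T : Fin d → Finset ℕ) (R : ℕ)
    (hT : ∀ r, (T r).card = R) : (glue d T).card = R * d := by
  rw [glue, Finset.card_biUnion (glue_disj d T)]
  have : ∀ r ∈ (Finset.univ : Finset (Fin d)),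
      ((T r).image (fun k => d * k + (r : ℕ))).card = R := by
    intro r _
    rw [Finset.card_image_of_injective _ (runner_inj d hd (r:ℕ)), hT r]
  rw [Finset.sum_congr rfl this, Finset.sum_const, Finset.card_univ, Fintype.card_fin,
    smul_eq_mul, mul_comm]

lemma glue_sum (d : ℕ) (hd : 0 < d) (T : Fin d → Finset ℕ) (R : ℕ)
    (hT : ∀ r, (T r).card = R) :
    ∑ x ∈ glue d T, x = d * (∑ r, ∑ k ∈ T r, k) + R * ∑ r ∈ range d, r := by
  rw [glue, Finset.sum_biUnion]
  swap
  · intro x hx y hy hxy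
    exact glue_disj d T x hx y hy hxy
  have hper : ∀ r : Fin d, ∑ x ∈ (T r).image (fun k => d * k + (r : ℕ)), x
      = d * ∑ k ∈ T r, k + R * (r : ℕ) := by
    intro r
    rw [Finset.sum_image (fun a _ b _ h => runner_inj d hd (r:ℕ) h), Finset.sum_add_distrib,
      ← Finset.mul_sum, Finset.sum_const, hT r, smul_eq_mul]
  rw [Finset.sum_congr rfl (fun r _ => hper r), Finset.sum_add_distrib, ← Finset.mul_sum,
    ← Finset.mul_sum]
  congr 1
  rw [← Fin.sum_univ_eq_sum_range (fun r => r) d, Finset.mul_sum]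

/-- forward fibre decomposition : gluing the fibres of the beads gives back the beads -/
lemma glue_fibres (d : ℕ) (hd : 0 < d) (S : Finset ℕ) :
    glue d (fun r : Fin d => (S.filter (fun x => x % d = (r:ℕ))).image (fun x => x / d)) = S := by
  ext x
  simp only [glue, Finset.mem_biUnion, Finset.mem_image, Finset.mem_univ, true_and,
    Finset.mem_filter]
  constructor
  · rintro ⟨r, k, ⟨y, ⟨hy, hymod⟩, rfl⟩, rfl⟩
    have := Nat.div_add_mod y d
    rw [show d * (y / d) + (r : ℕ) = y by omega]
    exact hy
  · intro hx
    refine ⟨⟨x % d, Nat.mod_lt _ hd⟩, x / d, ⟨x, ⟨hx, rfl⟩, rfl⟩, ?_⟩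
    have := Nat.div_add_mod x d
    simp only [Fin.val_mk]
    omega

end UCYAux


namespace UCYAux

lemma toBeads_ofBeads' (S : Finset ℕ) {m : ℕ} (hm : S.card = m) :
    toBeads m (ofBeads S) = S := by
  subst hm
  exact toBeads_ofBeads S

def fwdT (n d : ℕ) (Δ : YoungDiagram) : Fin d → Finset ℕ :=
  fun r => ((toBeads ((n * d + 1) * d) Δ).filter (fun x => x % d = (r : ℕ))).image (fun x => x / d)

lemma glue_fwdT (n d : ℕ) (hd : 0 < d) (Δ : YoungDiagram) :
    glue d (fwdT n d Δ) = toBeads ((n * d + 1) * d) Δ := by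
  exact glue_fibres d hd _

lemma fwdT_card (n d : ℕ) (hd : 0 < d) (Δ : YoungDiagram) (hcard : Δ.card = n * d)
    (hu : ∀ i : ZMod d, colourCount d Δ i = n) (r : Fin d) :
    (fwdT n d Δ r).card = n * d + 1 := by
  rw [fwdT, Finset.card_image_of_injOn (mod_image_injOn d hd _ _)]
  exact bridgeA n d (n * d + 1) hd Δ (rows_le n d hd Δ hcard) hu (r : ℕ) r.2

lemma fwdT_sum (n d : ℕ) (hd : 0 < d) (Δ : YoungDiagram) (hcard : Δ.card = n * d)
    (hu : ∀ i : ZMod d, colourCount d Δ i = n) :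
    ∑ r, ∑ k ∈ fwdT n d Δ r, k = n + d * ∑ s ∈ range (n * d + 1), s := by
  have h1 := glue_sum d hd (fwdT n d Δ) (n * d + 1) (fwdT_card n d hd Δ hcard hu)
  rw [glue_fwdT n d hd Δ, sum_toBeads _ _ (rows_le n d hd Δ hcard), hcard, stair] at h1
  have h2 : d * (∑ r, ∑ k ∈ fwdT n d Δ r, k) = d * (n + d * ∑ s ∈ range (n * d + 1), s) := by
    have e : d * (n + d * ∑ s ∈ range (n * d + 1), s)
        = d * n + d * (d * ∑ s ∈ range (n * d + 1), s) := Nat.mul_add _ _ _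
    have e2 : d * n = n * d := Nat.mul_comm _ _
    omega
  exact Nat.eq_of_mul_eq_mul_left hd h2

def bwdD (d : ℕ) (T : Fin d → Finset ℕ) : YoungDiagram := ofBeads (glue d T)

lemma bwdD_rows (n d : ℕ) (hd : 0 < d) (T : Fin d → Finset ℕ)
    (hT : ∀ r, (T r).card = n * d + 1) : (bwdD d T).colLen 0 ≤ (n * d + 1) * d := by
  have h := colLen_ofBeads (glue d T)
  rw [glue_card d hd T _ hT] at h
  exact h

lemma bwdD_card (n d : ℕ) (hd : 0 < d) (T : Fin d → Finset ℕ)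
    (hT : ∀ r, (T r).card = n * d + 1)
    (hsum : ∑ r, ∑ x ∈ T r, x = n + d * ∑ s ∈ range (n * d + 1), s) :
    (bwdD d T).card = n * d := by
  show (ofBeads (glue d T)).card = n * d
  have hc := comp_card (glue d T)
  rw [glue_card d hd T _ hT, glue_sum d hd T _ hT, hsum, stair] at hc
  have e : d * (n + d * ∑ s ∈ range (n * d + 1), s)
      = d * n + d * (d * ∑ s ∈ range (n * d + 1), s) := Nat.mul_add _ _ _
  have e2 : d * n = n * d := Nat.mul_comm _ _
  omega

lemma toBeads_bwdD (n d : ℕ) (hd : 0 < d) (T : Fin d → Finset ℕ)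
    (hT : ∀ r, (T r).card = n * d + 1) :
    toBeads ((n * d + 1) * d) (bwdD d T) = glue d T := by
  rw [show (n * d + 1) * d = (glue d T).card from (glue_card d hd T _ hT).symm]
  exact toBeads_ofBeads _

lemma bwdD_unif (n d : ℕ) (hd : 0 < d) (T : Fin d → Finset ℕ)
    (hT : ∀ r, (T r).card = n * d + 1)
    (hsum : ∑ r, ∑ x ∈ T r, x = n + d * ∑ s ∈ range (n * d + 1), s) :
    ∀ i : ZMod d, colourCount d (bwdD d T) i = n := by
  apply bridgeB n d (n * d + 1) hd _ (bwdD_rows n d hd T hT) _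
    (bwdD_card n d hd T hT hsum)
  intro r hr
  have hfib := glue_fiber d hd T ⟨r, hr⟩
  rw [toBeads_bwdD n d hd T hT, hfib,
    Finset.card_image_of_injective _ (runner_inj d hd r), hT ⟨r, hr⟩]

/-- The first equivalence : uniformly coloured diagrams ≃ runner tuples. -/
noncomputable def E1 (n d : ℕ) (hd : 0 < d) :
    {Δ : YoungDiagram // Δ.card = n * d ∧ ∀ i : ZMod d, colourCount d Δ i = n}
    ≃ {T : Fin d → Finset ℕ // (∀ r, (T r).card = n * d + 1) ∧
        (∑ r, ∑ x ∈ T r, x) = n + d * ∑ s ∈ range (n * d + 1), s} where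
  toFun p := ⟨fwdT n d p.1,
    fwdT_card n d hd p.1 p.2.1 p.2.2, fwdT_sum n d hd p.1 p.2.1 p.2.2⟩
  invFun q := ⟨bwdD d q.1, bwdD_card n d hd q.1 q.2.1 q.2.2, bwdD_unif n d hd q.1 q.2.1 q.2.2⟩
  left_inv p := by
    apply Subtype.ext
    show bwdD d (fwdT n d p.1) = p.1
    rw [bwdD, glue_fwdT n d hd p.1, ofBeads_toBeads _ _ (rows_le n d hd p.1 p.2.1)]
  right_inv q := by
    apply Subtype.ext
    funext r
    show fwdT n d (bwdD d q.1) r = q.1 r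
    rw [fwdT, toBeads_bwdD n d hd q.1 q.2.1, glue_fiber d hd q.1 r, Finset.image_image]
    have hco : ∀ k ∈ q.1 r, ((fun x => x / d) ∘ (fun k => d * k + (r : ℕ))) k = id k := by
      intro k _
      simp only [Function.comp_apply, id_eq]
      exact runner_div d hd _ r.2 k
    rw [Finset.image_congr hco, Finset.image_id]

/-- The second equivalence : runner tuples ≃ tuples of Young diagrams. -/
noncomputable def E2 (n d : ℕ) (hd : 0 < d) :
    {T : Fin d → Finset ℕ // (∀ r, (T r).card = n * d + 1) ∧
        (∑ r, ∑ x ∈ T r, x) = n + d * ∑ s ∈ range (n * d + 1), s}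
    ≃ {f : Fin d → YoungDiagram // ∑ i, (f i).card = n} where
  toFun p := ⟨fun r => ofBeads (p.1 r), by
    obtain ⟨T, hT, hsum⟩ := p
    dsimp only
    have h1 : ∑ r, ((ofBeads (T r)).card + ∑ k ∈ range (n * d + 1), k)
        = ∑ r, ∑ x ∈ T r, x := by
      refine Finset.sum_congr rfl fun r _ => ?_
      have h := comp_card (T r)
      rw [hT r] at h
      exact h
    rw [Finset.sum_add_distrib, Finset.sum_const, Finset.card_univ, Fintype.card_fin,
      smul_eq_mul, hsum] at h1
    omega⟩
  invFun q := ⟨fun r => toBeads (n * d + 1) (q.1 r), fun r => card_toBeads _ _, by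
    obtain ⟨f, hsum⟩ := q
    dsimp only
    have hrows : ∀ r, (f r).colLen 0 ≤ n * d + 1 := by
      intro r
      have h1 : (f r).card ≤ n :=
        le_trans (Finset.single_le_sum (f := fun i => (f i).card)
          (fun i _ => Nat.zero_le _) (Finset.mem_univ r)) (le_of_eq hsum)
      have h2 := colLen_le_card (f r)
      have h3 : n ≤ n * d := Nat.le_mul_of_pos_right _ hd
      omega
    have h1 : ∑ r, ∑ x ∈ toBeads (n * d + 1) (f r), x
        = ∑ r, ((f r).card + ∑ k ∈ range (n * d + 1), k) :=
      Finset.sum_congr rfl fun r _ => sum_toBeads _ _ (hrows r)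
    rw [h1, Finset.sum_add_distrib, Finset.sum_const, Finset.card_univ, Fintype.card_fin,
      smul_eq_mul, hsum]⟩
  left_inv p := by
    apply Subtype.ext
    funext r
    show toBeads (n * d + 1) (ofBeads (p.1 r)) = p.1 r
    exact toBeads_ofBeads' _ (p.2.1 r)
  right_inv q := by
    apply Subtype.ext
    funext r
    show ofBeads (toBeads (n * d + 1) (q.1 r)) = q.1 r
    apply ofBeads_toBeads
    have h1 : (q.1 r).card ≤ n :=
      le_trans (Finset.single_le_sum (f := fun i => (q.1 i).card)
        (fun i _ => Nat.zero_le _) (Finset.mem_univ r)) (le_of_eq q.2)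
    have h2 := colLen_le_card (q.1 r)
    have h3 : n ≤ n * d := Nat.le_mul_of_pos_right _ hd
    omega

end UCYAux



theorem UCY_eq_CY (n d : ℕ) (hd : 0 < d) : UCY n d = CY n d := by
  rw [UCY, CY]
  exact Nat.card_congr ((UCYAux.E1 n d hd).trans (UCYAux.E2 n d hd))
end

section
/- UCY(1,d) = d: there are exactly d Young diagrams with d boxes that are uniformly coloured in d colours (one box of each colour), namely the d hook diagrams with arm length a and leg length d−1−a for 0≤a≤d−1. -/
def hookCells (d a : ℕ) : Finset (ℕ × ℕ) :=
  (Finset.range (a + 1)).image (fun p => (p, 0)) ∪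
    (Finset.range (d - a)).image (fun q => ((0 : ℕ), q))

lemma mem_hookCells {d a : ℕ} {c : ℕ × ℕ} :
    c ∈ hookCells d a ↔ (c.2 = 0 ∧ c.1 ≤ a) ∨ (c.1 = 0 ∧ c.2 < d - a) := by
  obtain ⟨x, y⟩ := c
  simp only [hookCells, Finset.mem_union, Finset.mem_image, Finset.mem_range, Prod.ext_iff]
  constructor
  · rintro (⟨p, hp, rfl, rfl⟩ | ⟨q, hq, rfl, rfl⟩) <;> simp_all <;> omega
  · rintro (⟨rfl, h⟩ | ⟨rfl, h⟩)
    · exact Or.inl ⟨x, by omega, rfl, rfl⟩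
    · exact Or.inr ⟨y, h, rfl, rfl⟩

lemma colour_injOn {d a : ℕ} (hd : 0 < d) (ha : a < d) :
    Set.InjOn (fun c : ℕ × ℕ => ((c.1 : ZMod d) - (c.2 : ZMod d))) (hookCells d a) := by
  haveI : NeZero d := ⟨hd.ne'⟩
  have key : ∀ u v : ℕ, u < d → v < d → (u : ZMod d) = v → u = v := by
    intro u v hu hv huv
    have := congrArg ZMod.val huv
    rwa [ZMod.val_cast_of_lt hu, ZMod.val_cast_of_lt hv] at this
  have sumkey : ∀ u v : ℕ, u + v < d → (u : ZMod d) = -(v : ZMod d) → u = 0 ∧ v = 0 := by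
    intro u v huv h0
    rw [eq_neg_iff_add_eq_zero, ← Nat.cast_add, ZMod.natCast_eq_zero_iff] at h0
    have := Nat.eq_zero_of_dvd_of_lt h0
    omega
  rintro ⟨x1, x2⟩ hx ⟨y1, y2⟩ hy h
  simp only [Finset.mem_coe, mem_hookCells] at hx hy
  simp only at h hx hy
  rcases hx with ⟨hx2, hx1⟩ | ⟨hx1, hx2⟩ <;> rcases hy with ⟨hy2, hy1⟩ | ⟨hy1, hy2⟩
  · subst hx2 hy2
    simp only [Nat.cast_zero, sub_zero] at h
    have := key x1 y1 (by omega) (by omega) h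
    simp [this]
  · subst hx2 hy1
    simp only [Nat.cast_zero, sub_zero, zero_sub] at h
    have := sumkey x1 y2 (by omega) h
    simp [this.1, this.2]
  · subst hx1 hy2
    simp only [Nat.cast_zero, sub_zero, zero_sub] at h
    have := sumkey y1 x2 (by omega) h.symm
    simp [this.1, this.2]
  · subst hx1 hy1
    simp only [Nat.cast_zero, zero_sub, neg_inj] at h
    have := key x2 y2 (by omega) (by omega) h
    simp [this]

lemma hookCells_card {d a : ℕ} (hd : 0 < d) (ha : a < d) : (hookCells d a).card = d := by
  have hinj1 : Function.Injective (fun p : ℕ => (p, (0:ℕ))) := fun p q h => (Prod.ext_iff.1 h).1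
  have hinj2 : Function.Injective (fun q : ℕ => ((0:ℕ), q)) := fun p q h => (Prod.ext_iff.1 h).2
  have hA : ((Finset.range (a + 1)).image (fun p => (p, (0:ℕ)))).card = a + 1 := by
    rw [Finset.card_image_of_injective _ hinj1, Finset.card_range]
  have hB : ((Finset.range (d - a)).image (fun q => ((0:ℕ), q))).card = d - a := by
    rw [Finset.card_image_of_injective _ hinj2, Finset.card_range]
  have hI : ((Finset.range (a + 1)).image (fun p => (p, (0:ℕ))) ∩
      (Finset.range (d - a)).image (fun q => ((0:ℕ), q))) = {((0:ℕ), (0:ℕ))} := by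
    ext ⟨x, y⟩
    simp only [Finset.mem_inter, Finset.mem_image, Finset.mem_range, Prod.ext_iff,
      Finset.mem_singleton]
    constructor
    · rintro ⟨⟨p, hp, rfl, rfl⟩, ⟨q, hq, rfl, rfl⟩⟩
      exact ⟨rfl, rfl⟩
    · rintro ⟨rfl, rfl⟩
      exact ⟨⟨0, by omega, rfl, rfl⟩, ⟨0, by omega, rfl, rfl⟩⟩
  have := Finset.card_union_add_card_inter
    ((Finset.range (a + 1)).image (fun p => (p, (0:ℕ))))
    ((Finset.range (d - a)).image (fun q => ((0:ℕ), q)))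
  rw [hI, hA, hB, Finset.card_singleton] at this
  rw [hookCells]
  omega

lemma filter_card_one {d : ℕ} (hd : 0 < d) (S : Finset (ℕ × ℕ))
    (f : ℕ × ℕ → ZMod d) (hcard : S.card = d) (hinj : Set.InjOn f S) (i : ZMod d) :
    (S.filter (fun c => f c = i)).card = 1 := by
  haveI : NeZero d := ⟨hd.ne'⟩
  have himg : (S.image f).card = d := by rw [Finset.card_image_of_injOn hinj, hcard]
  have huniv : S.image f = Finset.univ :=
    Finset.eq_univ_of_card _ (by rw [himg, ZMod.card])
  obtain ⟨c, hc, hfc⟩ := Finset.mem_image.1 (huniv ▸ Finset.mem_univ i)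
  rw [Finset.card_eq_one]
  refine ⟨c, ?_⟩
  ext x
  simp only [Finset.mem_filter, Finset.mem_singleton]
  constructor
  · rintro ⟨hx, hfx⟩
    exact hinj hx hc (by rw [hfx, hfc])
  · rintro rfl
    exact ⟨hc, hfc⟩

def hookDiagram (d a : ℕ) : YoungDiagram where
  cells := hookCells d a
  isLowerSet := by
    rintro ⟨x1, x2⟩ ⟨y1, y2⟩ ⟨h1, h2⟩ hy
    simp only [Finset.coe_sort_coe, Finset.mem_coe] at *
    rw [mem_hookCells] at hy ⊢
    simp only at *
    omega

lemma key {d : ℕ} (hd : 0 < d) (Δ : YoungDiagram) :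
    (Δ.card = 1 * d ∧ ∀ i : ZMod d, colourCount d Δ i = 1) ↔
      ∃ a < d, Δ.cells = hookCells d a := by
  constructor
  · rintro ⟨h1, h2⟩
    rw [one_mul] at h1
    have h0 : (0, 0) ∈ Δ := by
      have hpos : 0 < Δ.cells.card := by
        rw [show Δ.cells.card = Δ.card from rfl, h1]; exact hd
      obtain ⟨⟨x, y⟩, hxy⟩ := Finset.card_pos.1 hpos
      exact Δ.up_left_mem (Nat.zero_le _) (Nat.zero_le _) ((Δ.mem_cells _).1 hxy)
    have h11 : (1, 1) ∉ Δ := by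
      intro h11
      have hsub : ({((0:ℕ), (0:ℕ)), ((1:ℕ), (1:ℕ))} : Finset (ℕ × ℕ)) ⊆
          Δ.cells.filter (fun c => ((c.1 : ZMod d) - (c.2 : ZMod d)) = 0) := by
        intro x hx
        simp only [Finset.mem_insert, Finset.mem_singleton] at hx
        rcases hx with rfl | rfl
        · exact Finset.mem_filter.2 ⟨(Δ.mem_cells _).2 h0, by norm_num⟩
        · exact Finset.mem_filter.2 ⟨(Δ.mem_cells _).2 h11, by norm_num⟩
      have := Finset.card_le_card hsub
      rw [show (({((0:ℕ), (0:ℕ)), ((1:ℕ), (1:ℕ))} : Finset (ℕ × ℕ))).card = 2 by decide] at this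
      have := h2 0
      rw [colourCount] at this
      omega
    have hflat : ∀ x y : ℕ, (x, y) ∈ Δ → x = 0 ∨ y = 0 := by
      intro x y hxy
      by_contra hc
      push_neg at hc
      exact h11 (Δ.up_left_mem (by omega) (by omega) hxy)
    set cl := Δ.colLen 0 with hcl'
    set r := Δ.rowLen 0 with hr'
    have hcl : 0 < cl := YoungDiagram.mem_iff_lt_colLen.1 h0
    have hr : 0 < r := YoungDiagram.mem_iff_lt_rowLen.1 h0
    have hcells : Δ.cells = hookCells (cl - 1 + r) (cl - 1) := by
      ext ⟨x, y⟩
      rw [Δ.mem_cells, mem_hookCells]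
      simp only
      constructor
      · intro hxy
        rcases hflat x y hxy with rfl | rfl
        · right
          exact ⟨rfl, by have := YoungDiagram.mem_iff_lt_rowLen.1 hxy; omega⟩
        · left
          exact ⟨rfl, by have := YoungDiagram.mem_iff_lt_colLen.1 hxy; omega⟩
      · rintro (⟨rfl, hx⟩ | ⟨rfl, hy⟩)
        · exact YoungDiagram.mem_iff_lt_colLen.2 (by omega)
        · exact YoungDiagram.mem_iff_lt_rowLen.2 (by omega)
    have hcard : Δ.card = cl - 1 + r := by
      rw [YoungDiagram.card, hcells, hookCells_card (by omega) (by omega)]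
    refine ⟨cl - 1, by omega, ?_⟩
    rw [hcells]
    congr 1
    omega
  · rintro ⟨a, ha, hc⟩
    have hcard : Δ.card = 1 * d := by
      rw [one_mul, YoungDiagram.card, hc, hookCells_card hd ha]
    refine ⟨hcard, fun i => ?_⟩
    rw [colourCount, hc]
    exact filter_card_one hd _ _ (hookCells_card hd ha) (colour_injOn hd ha) i

lemma count_eq {d : ℕ} (hd : 0 < d) :
    Nat.card {Δ : YoungDiagram // Δ.card = 1 * d ∧ ∀ i : ZMod d, colourCount d Δ i = 1} = d := by
  let f : Fin d → {Δ : YoungDiagram // Δ.card = 1 * d ∧ ∀ i : ZMod d, colourCount d Δ i = 1} :=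
    fun a => ⟨hookDiagram d a, (key hd _).2 ⟨a, a.2, rfl⟩⟩
  have hle : ∀ a1 a2 : ℕ, hookCells d a1 = hookCells d a2 → a1 ≤ a2 := by
    intro a1 a2 h
    have : ((a1 : ℕ), (0 : ℕ)) ∈ hookCells d a2 := by
      rw [← h, mem_hookCells]; exact Or.inl ⟨rfl, le_refl _⟩
    rw [mem_hookCells] at this
    simp only at this
    omega
  have hbij : Function.Bijective f := by
    constructor
    · intro a1 a2 h
      have hc : hookCells d a1 = hookCells d a2 := congrArg (fun x => x.1.cells) h
      exact Fin.ext (le_antisymm (hle _ _ hc) (hle _ _ hc.symm))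
    · rintro ⟨Δ, hΔ⟩
      obtain ⟨a, ha, hc⟩ := (key hd Δ).1 hΔ
      refine ⟨⟨a, ha⟩, Subtype.ext ?_⟩
      exact YoungDiagram.ext hc.symm
  rw [← Nat.card_eq_of_bijective f hbij, Nat.card_eq_fintype_card, Fintype.card_fin]

/-- `UCY 1 d = d`, and the uniformly coloured Young diagrams with one box of each of the
`d` colours are exactly the `d` hook diagrams with arm length `a` and leg length `d-1-a`
for `0 ≤ a ≤ d-1`. -/
theorem UCY_one (d : ℕ) (hd : 0 < d) :
    UCY 1 d = d ∧
    ∀ Δ : YoungDiagram,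
      (Δ.card = 1 * d ∧ ∀ i : ZMod d, colourCount d Δ i = 1) ↔
      ∃ a < d, Δ.cells =
        (Finset.range (a + 1)).image (fun p => (p, 0)) ∪
        (Finset.range (d - a)).image (fun q => ((0 : ℕ), q)) := by
  constructor
  · rw [UCY]
    exact count_eq hd
  · intro Δ
    exact key hd Δ
end

section
/- Let d, n be positive integers, v⁰ ∈ (ℤ_{>0})^d with v⁰₀ = 1, and define the cone C⁻(n) = { ζ ∈ ℝ^d : ζ·v⁰ > 0 and ζ·v > n(ζ·v⁰) for all v ∈ K_n }, where K_n = { v ∈ ℤ_{≥0}^d : v₀v⁰ < v < n v⁰ } (componentwise strict at some coordinate, with v₀v⁰ ≤ v ≤ nv⁰ and v ≠ v₀v⁰, v ≠ nv⁰). Then C⁻(n) = { ζ ∈ ℝ^d : (1/n)·min_{1≤k≤d−1} ζ_k − Σ_{k=1}^{d−1} ζ_k v⁰_k > ζ₀ > −Σ_{k=1}^{d−1} ζ_k v⁰_k }. In particular C⁻(n) is nonempty, and every ζ ∈ C⁻(n) satisfies ζ_k > 0 for all 1 ≤ k ≤ d−1. -/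
open Finset

/-- The set `K n` of dimension vectors `v` with `v₀·v⁰ < v < n·v⁰` (componentwise,
strict as vectors). -/
def Kn (d n : ℕ) (v0 : Fin d → ℤ) (z : Fin d) : Set (Fin d → ℤ) :=
  {v | (∀ i, 0 ≤ v i) ∧ (fun i => v z * v0 i) < v ∧ v < (fun i => (n : ℤ) * v0 i)}

/-- The cone `C⁻(n)` of real parameters. -/
def Cminus (d n : ℕ) (v0 : Fin d → ℤ) (z : Fin d) : Set (Fin d → ℝ) :=
  {ζ | 0 < ∑ i, ζ i * (v0 i : ℝ) ∧
    ∀ v ∈ Kn d n v0 z, (n : ℝ) * ∑ i, ζ i * (v0 i : ℝ) < ∑ i, ζ i * (v i : ℝ)}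

lemma Cminus_key (d n : ℕ) (hn : 0 < n)
    (v0 : Fin d → ℤ) (hv0 : ∀ i, 0 < v0 i)
    (z : Fin d) (h0 : v0 z = 1) (ζ : Fin d → ℝ) :
    ζ ∈ Cminus d n v0 z ↔
      (0 < ∑ i, ζ i * (v0 i : ℝ)) ∧
      ∀ k, k ≠ z → (n : ℝ) * ∑ i, ζ i * (v0 i : ℝ) < ζ k := by
  have hn1 : (1 : ℤ) ≤ n := by exact_mod_cast hn
  constructor
  · rintro ⟨hS, hK⟩
    refine ⟨hS, fun k hk => ?_⟩
    have hzk : z ≠ k := Ne.symm hk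
    have hmem : (fun i => if i = k then (1 : ℤ) else 0) ∈ Kn d n v0 z := by
      refine ⟨fun i => by show (0:ℤ) ≤ if i = k then 1 else 0; split <;> norm_num, ?_, ?_⟩
      · rw [Pi.lt_def]
        refine ⟨fun i => ?_, ⟨k, ?_⟩⟩
        · show (if z = k then (1:ℤ) else 0) * v0 i ≤ if i = k then 1 else 0
          rw [if_neg hzk, zero_mul]
          split <;> norm_num
        · show (if z = k then (1:ℤ) else 0) * v0 k < if k = k then 1 else 0
          rw [if_neg hzk, if_pos rfl, zero_mul]
          norm_num
      · rw [Pi.lt_def]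
        refine ⟨fun i => ?_, ⟨z, ?_⟩⟩
        · show (if i = k then (1:ℤ) else 0) ≤ n * v0 i
          split
          · nlinarith [hv0 i]
          · exact mul_nonneg (by positivity) (hv0 i).le
        · show (if z = k then (1:ℤ) else 0) < n * v0 z
          rw [if_neg hzk, h0]
          omega
    have := hK _ hmem
    simpa [apply_ite (Int.cast : ℤ → ℝ), mul_ite, Finset.sum_ite_eq'] using this
  · rintro ⟨hS, hk⟩
    refine ⟨hS, fun v hv => ?_⟩
    obtain ⟨h1, h2, h3⟩ := hv
    rw [Pi.lt_def] at h2
    obtain ⟨hle, j, hj⟩ := h2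
    have hjz : j ≠ z := by
      rintro rfl
      rw [h0, mul_one] at hj
      omega
    have hnS : 0 < (n : ℝ) * ∑ i, ζ i * (v0 i : ℝ) := by
      have : (1 : ℝ) ≤ n := by exact_mod_cast hn
      nlinarith
    have hζpos : ∀ i, i ≠ z → 0 < ζ i := fun i hi => lt_trans hnS (hk i hi)
    have hsplit : ∑ i, ζ i * (v i : ℝ) =
        (v z : ℝ) * ∑ i, ζ i * (v0 i : ℝ) +
          ∑ i, ζ i * ((v i - v z * v0 i : ℤ) : ℝ) := by
      rw [Finset.mul_sum, ← Finset.sum_add_distrib]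
      apply Finset.sum_congr rfl
      intros i _
      push_cast
      ring
    have hterm : ∀ i ∈ (univ : Finset (Fin d)),
        0 ≤ ζ i * ((v i - v z * v0 i : ℤ) : ℝ) := by
      intro i _
      by_cases hi : i = z
      · subst hi
        rw [h0, mul_one]
        simp
      · have h1' : (0 : ℝ) ≤ ((v i - v z * v0 i : ℤ) : ℝ) := by
          have := hle i
          exact_mod_cast sub_nonneg.mpr this
        exact mul_nonneg (hζpos i hi).le h1'
    have hsingle : ζ j * ((v j - v z * v0 j : ℤ) : ℝ) ≤
        ∑ i, ζ i * ((v i - v z * v0 i : ℤ) : ℝ) :=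
      Finset.single_le_sum hterm (mem_univ j)
    have hwj : (1 : ℝ) ≤ ((v j - v z * v0 j : ℤ) : ℝ) := by
      exact_mod_cast (by omega : (1 : ℤ) ≤ v j - v z * v0 j)
    have hζj : (n : ℝ) * ∑ i, ζ i * (v0 i : ℝ) < ζ j := hk j hjz
    have hvz : (0 : ℝ) ≤ (v z : ℝ) := by exact_mod_cast h1 z
    have hζjw : ζ j ≤ ζ j * ((v j - v z * v0 j : ℤ) : ℝ) :=
      le_mul_of_one_le_right (hζpos j hjz).le hwj
    nlinarith [mul_nonneg hvz hS.le]

/-- Lemma on the explicit description of `C⁻(n)`: it equals the set of `ζ` with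
`(1/n)·min_{k≠0} ζ_k − Σ_{k≠0} ζ_k v⁰_k > ζ₀ > −Σ_{k≠0} ζ_k v⁰_k`; in particular
it is nonempty and every `ζ ∈ C⁻(n)` has `ζ_k > 0` for all `k ≠ 0`. -/
theorem Cminus_description (d n : ℕ) (hd : 2 ≤ d) (hn : 0 < n)
    (v0 : Fin d → ℤ) (hv0 : ∀ i, 0 < v0 i)
    (z : Fin d) (hz : z = ⟨0, by omega⟩) (h0 : v0 z = 1)
    (hne : (univ.erase z).Nonempty) :
    Cminus d n v0 z =
      {ζ : Fin d → ℝ |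
        (1 / (n : ℝ)) * (univ.erase z).inf' hne ζ - ∑ k ∈ univ.erase z, ζ k * (v0 k : ℝ)
          > ζ z ∧
        ζ z > - ∑ k ∈ univ.erase z, ζ k * (v0 k : ℝ)} ∧
    (Cminus d n v0 z).Nonempty ∧
    ∀ ζ ∈ Cminus d n v0 z, ∀ k, k ≠ z → 0 < ζ k := by
  have hn' : (0 : ℝ) < n := by exact_mod_cast hn
  have hSsplit : ∀ ζ : Fin d → ℝ,
      ∑ i, ζ i * (v0 i : ℝ) = (∑ k ∈ univ.erase z, ζ k * (v0 k : ℝ)) + ζ z := by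
    intro ζ
    rw [← Finset.sum_erase_add _ _ (mem_univ z), h0]
    norm_num
  refine ⟨?_, ?_, ?_⟩
  · ext ζ
    rw [Cminus_key d n hn v0 hv0 z h0 ζ]
    simp only [Set.mem_setOf_eq, gt_iff_lt, hSsplit ζ]
    set T := ∑ k ∈ univ.erase z, ζ k * (v0 k : ℝ) with hT
    constructor
    · rintro ⟨hS, hk⟩
      refine ⟨?_, by linarith⟩
      have hinf : (n : ℝ) * (T + ζ z) < (univ.erase z).inf' hne ζ := by
        rw [Finset.lt_inf'_iff]
        intro k hkmem
        exact hk k (Finset.ne_of_mem_erase hkmem)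
      have h2 : T + ζ z < (univ.erase z).inf' hne ζ / n :=
        (lt_div_iff₀ hn').mpr (by linarith [hinf])
      have h3 : (1 / (n : ℝ)) * (univ.erase z).inf' hne ζ
          = (univ.erase z).inf' hne ζ / n := by ring
      linarith
    · rintro ⟨h1, h2⟩
      have hS : 0 < T + ζ z := by linarith
      refine ⟨hS, fun k hk => ?_⟩
      have hinf : (univ.erase z).inf' hne ζ ≤ ζ k :=
        Finset.inf'_le _ (Finset.mem_erase.mpr ⟨hk, mem_univ k⟩)
      have h4 : (n : ℝ) * (T + ζ z) < (univ.erase z).inf' hne ζ := by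
        have h5 : ζ z + T < (1 / n) * (univ.erase z).inf' hne ζ := by linarith
        have h6 : (n : ℝ) * ((1 / n) * (univ.erase z).inf' hne ζ)
            = (univ.erase z).inf' hne ζ := by field_simp
        nlinarith
      linarith
  · refine ⟨fun i => if i = z then 1 / (2 * n) - ∑ k ∈ univ.erase z, (v0 k : ℝ) else 1, ?_⟩
    rw [Cminus_key d n hn v0 hv0 z h0]
    have hSval : ∑ i, (if i = z then 1 / (2 * (n:ℝ)) - ∑ k ∈ univ.erase z, (v0 k : ℝ) else 1) * (v0 i : ℝ)
        = 1 / (2 * n) := by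
      rw [← Finset.sum_erase_add _ _ (mem_univ z), h0, if_pos rfl]
      push_cast
      rw [Finset.sum_congr rfl (fun k hk => by
        rw [if_neg (Finset.ne_of_mem_erase hk), one_mul])]
      ring
    rw [hSval]
    constructor
    · positivity
    · intro k hk
      rw [if_neg hk, mul_one_div, div_lt_one (by positivity)]
      linarith
  · intro ζ hζ k hk
    rw [Cminus_key d n hn v0 hv0 z h0] at hζ
    obtain ⟨hS, hK⟩ := hζ
    have := hK k hk
    nlinarith
end
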